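/- arXiv:1604.05072 — 4 statements merged into one kernel-verified Lean document; each statement's English description precedes it below -/
import Mathlib

section
/- Let Ω ⊂ ℝ^N be an open bounded set. Then the Fraenkel asymmetry satisfies A(Ω) ≤ 2N · d_N(Ω), where d_N(Ω) = 1 - r_Ω / R_Ω, r_Ω is the inradius of Ω and R_Ω = (|Ω|/ω_N)^(1/N). -/
open MeasureTheory Metric

/-- The Fraenkel asymmetry of a set `E ⊆ ℝ^N`. -/
noncomputable def fraenkelAsymmetry (N : ℕ) (E : Set (EuclideanSpace ℝ (Fin N))) : ℝ :=
  sInf { a : ℝ | ∃ (c : EuclideanSpace ℝ (Fin N)) (r : ℝ), 0 < r ∧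
    volume (ball c r) = volume E ∧
    a = (volume (symmDiff E (ball c r))).toReal / (volume E).toReal }

/-- The inradius of a set: the supremum of the radii of balls contained in it. -/
noncomputable def inradius (N : ℕ) (Ω : Set (EuclideanSpace ℝ (Fin N))) : ℝ :=
  sSup { r : ℝ | 0 < r ∧ ∃ c : EuclideanSpace ℝ (Fin N), ball c r ⊆ Ω }

/-
If `ball c r ⊆ Ω` and `B = ball c R` has the volume of `Ω`, then `ball c r ⊆ B`, and both
`Ω \ B` and `B \ Ω` have measure at most `|B| - |ball c r|`. Hence
`|Ω ∆ B| / |Ω| ≤ 2 (1 - (r / R) ^ N) ≤ 2 N (1 - r / R)` by Bernoulli's inequality, and letting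
`r` increase to the inradius gives the bound.
-/

open scoped symmDiff ENNReal
open Module

section SymmDiff

variable {α : Type*} [MeasurableSpace α] {μ : Measure α} {s t u : Set α}

theorem measureReal_symmDiff_le_of_subset_inter (hu : MeasurableSet u) (hus : u ⊆ s)
    (hut : u ⊆ t) (hs : μ s ≠ ∞) (ht : μ t ≠ ∞) :
    μ.real (s ∆ t) ≤ (μ.real s - μ.real u) + (μ.real t - μ.real u) :=
  calc μ.real (s ∆ t) ≤ μ.real (s \ t) + μ.real (t \ s) := measureReal_union_le _ _
    _ ≤ μ.real (s \ u) + μ.real (t \ u) := by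
      gcongr
      exacts [measure_ne_top_of_subset Set.sdiff_subset hs,
        measure_ne_top_of_subset Set.sdiff_subset ht]
    _ = (μ.real s - μ.real u) + (μ.real t - μ.real u) := by
      rw [measureReal_sdiff hus hu hs, measureReal_sdiff hut hu ht]

end SymmDiff

section AddHaar

variable {E : Type*} [NormedAddCommGroup E] [NormedSpace ℝ E] [FiniteDimensional ℝ E]
  [MeasurableSpace E] (μ : Measure E) [μ.IsAddHaarMeasure]

theorem addHaar_real_ball_pos (x : E) {r : ℝ} (hr : 0 < r) : 0 < μ.real (ball x r) :=
  ENNReal.toReal_pos (measure_ball_pos μ x hr).ne' measure_ball_lt_top.ne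

variable [BorelSpace E]

theorem addHaar_real_ball_of_pos (x : E) {r : ℝ} (hr : 0 < r) :
    μ.real (ball x r) = r ^ finrank ℝ E * μ.real (ball 0 1) := by
  rw [measureReal_def, Measure.addHaar_ball_of_pos μ x hr, ENNReal.toReal_mul,
    ENNReal.toReal_ofReal (by positivity), measureReal_def]

theorem ball_subset_ball_of_measure_le {x : E} {r R : ℝ} (hr : 0 < r)
    (h : μ (ball x r) ≤ μ (ball x R)) : ball x r ⊆ ball x R := by
  have hR : 0 < R := by
    by_contra! hR
    rw [ball_eq_empty.2 hR, measure_empty, nonpos_iff_eq_zero] at h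
    exact (measure_ball_pos μ x hr).ne' h
  by_cases hn : finrank ℝ E = 0
  · have := (finrank_eq_zero_iff_of_free ℝ E).1 hn
    rw [(nonempty_ball.2 hR).eq_univ]
    exact Set.subset_univ _
  refine ball_subset_ball (le_of_pow_le_pow_left₀ hn hR.le ?_)
  rwa [Measure.addHaar_ball_of_pos μ x hr, Measure.addHaar_ball_of_pos μ x hR,
    ENNReal.mul_le_mul_iff_left (measure_ball_pos μ 0 one_pos).ne' measure_ball_lt_top.ne,
    ENNReal.ofReal_le_ofReal_iff (by positivity)] at h

theorem addHaar_ball_rpow_eq {s : Set E} (hs : 0 < μ s) (hs' : μ s ≠ ∞) (x : E) :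
    μ (ball x ((μ.real s / μ.real (ball 0 1)) ^ ((1 : ℝ) / finrank ℝ E))) = μ s := by
  have hω := addHaar_real_ball_pos μ 0 one_pos
  have hρ : 0 < μ.real s / μ.real (ball 0 1) := div_pos (ENNReal.toReal_pos hs.ne' hs') hω
  by_cases hn : finrank ℝ E = 0
  · have := (finrank_eq_zero_iff_of_free ℝ E).1 hn
    rw [(nonempty_ball.2 (by positivity)).eq_univ,
      (nonempty_of_measure_ne_zero hs.ne').eq_univ]
  rw [Measure.addHaar_ball_of_pos μ x (by positivity), one_div,
    Real.rpow_inv_natCast_pow hρ.le hn, ENNReal.ofReal_div_of_pos hω, ofReal_measureReal hs',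
    ofReal_measureReal, ENNReal.div_mul_cancel (measure_ball_pos μ 0 one_pos).ne'
      measure_ball_lt_top.ne]

end AddHaar

theorem one_sub_pow_le_mul_one_sub {t : ℝ} (ht : 0 ≤ t) (n : ℕ) : 1 - t ^ n ≤ n * (1 - t) := by
  linarith [one_add_mul_sub_le_pow (by linarith : -1 ≤ t) n]

section Asymmetry

variable {N : ℕ} {Ω : Set (EuclideanSpace ℝ (Fin N))}

theorem fraenkelAsymmetry_le_of_measure_ball_eq {c : EuclideanSpace ℝ (Fin N)} {R : ℝ}
    (hR : 0 < R) (h : volume (ball c R) = volume Ω) :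
    fraenkelAsymmetry N Ω ≤ volume.real (Ω ∆ ball c R) / volume.real Ω :=
  csInf_le ⟨0, by rintro a ⟨c, r, -, -, rfl⟩; positivity⟩ ⟨c, R, hR, h, rfl⟩

theorem fraenkelAsymmetry_le_of_ball_subset (hΩ : volume Ω ≠ ∞) {c : EuclideanSpace ℝ (Fin N)}
    {r R : ℝ} (hr : 0 < r) (hR : 0 < R) (hB : volume (ball c R) = volume Ω)
    (hsub : ball c r ⊆ Ω) : fraenkelAsymmetry N Ω ≤ 2 * N * (1 - r / R) := by
  have hrR : ball c r ⊆ ball c R :=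
    ball_subset_ball_of_measure_le volume hr (hB ▸ measure_mono hsub)
  have hsd := measureReal_symmDiff_le_of_subset_inter measurableSet_ball hsub hrR hΩ
    (hB ▸ hΩ)
  have hBreal : volume.real (ball c R) = volume.real Ω := congrArg ENNReal.toReal hB
  have hω := addHaar_real_ball_pos volume (0 : EuclideanSpace ℝ (Fin N)) one_pos
  calc fraenkelAsymmetry N Ω ≤ volume.real (Ω ∆ ball c R) / volume.real (ball c R) := by
        rw [hBreal]; exact fraenkelAsymmetry_le_of_measure_ball_eq hR hB
    _ ≤ 2 * (volume.real (ball c R) - volume.real (ball c r)) / volume.real (ball c R) := by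
        gcongr; linarith
    _ = 2 * (1 - (r / R) ^ N) := by
        rw [addHaar_real_ball_of_pos _ c hr, addHaar_real_ball_of_pos _ c hR,
          finrank_euclideanSpace_fin, div_pow]
        field_simp
    _ ≤ 2 * N * (1 - r / R) := by
        rw [mul_assoc]; gcongr; exact one_sub_pow_le_mul_one_sub (by positivity) N

end Asymmetry

theorem le_mul_one_sub_sSup_div {S : Set ℝ} (hS : S.Nonempty) {a k R : ℝ} (hk : 0 ≤ k)
    (hR : 0 ≤ R) (h : ∀ r ∈ S, a ≤ k * (1 - r / R)) : a ≤ k * (1 - sSup S / R) := by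
  have affine : ∀ x, k * (1 - x / R) = k - k / R * x := fun x => by ring
  simp only [affine] at h ⊢
  rcases (div_nonneg hk hR).eq_or_lt with hkR | hkR
  · obtain ⟨r, hr⟩ := hS
    simpa [← hkR] using h r hr
  have : sSup S ≤ (k - a) / (k / R) := csSup_le hS fun r hr => by
    rw [le_div_iff₀ hkR]; linarith [h r hr]
  rw [le_div_iff₀ hkR] at this
  linarith

/-- Comparison between the Fraenkel asymmetry and the Hansen–Nadirashvili asymmetry
`d_N(Ω) = 1 - r_Ω / R_Ω`: one has `A(Ω) ≤ 2 N d_N(Ω)`. -/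
theorem fraenkelAsymmetry_le_hansenNadirashvili (N : ℕ) (Ω : Set (EuclideanSpace ℝ (Fin N)))
    (hΩ : IsOpen Ω) (hb : Bornology.IsBounded Ω) (hpos : 0 < volume Ω) :
    fraenkelAsymmetry N Ω ≤
      2 * N * (1 - inradius N Ω /
        ((volume Ω).toReal / (volume (ball (0 : EuclideanSpace ℝ (Fin N)) 1)).toReal)
          ^ ((1 : ℝ) / N)) := by
  have hfin : volume Ω ≠ ∞ := hb.measure_lt_top.ne
  have hB := addHaar_ball_rpow_eq volume hpos hfin
  rw [finrank_euclideanSpace_fin] at hB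
  simp only [← measureReal_def]
  set R := (volume.real Ω / volume.real (ball (0 : EuclideanSpace ℝ (Fin N)) 1)) ^ ((1 : ℝ) / N)
  have hR : 0 < R := by
    by_contra! hR
    have hB0 := hB 0
    rw [ball_eq_empty.2 hR, measure_empty] at hB0
    exact hpos.ne hB0
  have hS : { r : ℝ | 0 < r ∧ ∃ c : EuclideanSpace ℝ (Fin N), ball c r ⊆ Ω }.Nonempty := by
    obtain ⟨x, hx⟩ := nonempty_of_measure_ne_zero hpos.ne'
    obtain ⟨ε, hε, hball⟩ := isOpen_iff.1 hΩ x hx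
    exact ⟨ε, hε, x, hball⟩
  refine le_mul_one_sub_sSup_div hS (by positivity) hR.le ?_
  rintro r ⟨hr, c, hsub⟩
  exact fraenkelAsymmetry_le_of_ball_subset hfin hr hR (hB c) hsub
end

section
/- Let Ω ⊂ ℝ^N be an open bounded set. For every pair of balls B₁ ⊂ Ω ⊂ B₂, the Fraenkel asymmetry satisfies A(Ω) ≤ 2 · max( |Ω \ B₁|/|Ω| , |B₂ \ Ω|/|B₂| ). In particular A(Ω) ≤ 2 · d_M(Ω), where d_M is the infimum of this maximum over all admissible pairs of balls. -/
open MeasureTheory Metric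

/-- Melas' asymmetry `d_M(Ω)`: the infimum over pairs of balls `B₁ ⊆ Ω ⊆ B₂` of
`max(|Ω \ B₁|/|Ω|, |B₂ \ Ω|/|B₂|)`. -/
noncomputable def melasAsymmetry (N : ℕ) (Ω : Set (EuclideanSpace ℝ (Fin N))) : ℝ :=
  sInf { a : ℝ | ∃ (c₁ c₂ : EuclideanSpace ℝ (Fin N)) (r₁ r₂ : ℝ), 0 < r₁ ∧ 0 < r₂ ∧
    ball c₁ r₁ ⊆ Ω ∧ Ω ⊆ ball c₂ r₂ ∧
    a = max ((volume (Ω \ ball c₁ r₁)).toReal / (volume Ω).toReal)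
            ((volume (ball c₂ r₂ \ Ω)).toReal / (volume (ball c₂ r₂)).toReal) }

/-- For every pair of balls `B₁ ⊆ Ω ⊆ B₂`, the Fraenkel asymmetry is bounded by twice the
maximum of the relative measure defects; in particular `A(Ω) ≤ 2 d_M(Ω)`. -/
theorem fraenkelAsymmetry_le_melas (N : ℕ) (Ω : Set (EuclideanSpace ℝ (Fin N)))
    (hΩ : IsOpen Ω) (hb : Bornology.IsBounded Ω) (hpos : 0 < volume Ω) :
    (∀ (c₁ c₂ : EuclideanSpace ℝ (Fin N)) (r₁ r₂ : ℝ), 0 < r₁ → 0 < r₂ →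
      ball c₁ r₁ ⊆ Ω → Ω ⊆ ball c₂ r₂ →
      fraenkelAsymmetry N Ω ≤
        2 * max ((volume (Ω \ ball c₁ r₁)).toReal / (volume Ω).toReal)
                ((volume (ball c₂ r₂ \ Ω)).toReal / (volume (ball c₂ r₂)).toReal)) ∧
    fraenkelAsymmetry N Ω ≤ 2 * melasAsymmetry N Ω := by
  have hVlt : volume Ω < ⊤ := hb.measure_lt_top
  have hVt : (0:ℝ) < (volume Ω).toReal := ENNReal.toReal_pos hpos.ne' hVlt.ne
  have hbdd : BddBelow { a : ℝ | ∃ (c : EuclideanSpace ℝ (Fin N)) (r : ℝ), 0 < r ∧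
      volume (ball c r) = volume Ω ∧
      a = (volume (symmDiff Ω (ball c r))).toReal / (volume Ω).toReal } := by
    refine ⟨0, ?_⟩
    rintro a ⟨c, r, -, -, rfl⟩
    positivity
  have key : ∀ (c₁ c₂ : EuclideanSpace ℝ (Fin N)) (r₁ r₂ : ℝ), 0 < r₁ → 0 < r₂ →
      ball c₁ r₁ ⊆ Ω → Ω ⊆ ball c₂ r₂ →
      fraenkelAsymmetry N Ω ≤
        2 * max ((volume (Ω \ ball c₁ r₁)).toReal / (volume Ω).toReal)
                ((volume (ball c₂ r₂ \ Ω)).toReal / (volume (ball c₂ r₂)).toReal) := by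
    intro c₁ c₂ r₁ r₂ hr₁ hr₂ hB₁ hB₂
    have hmaxnn : 0 ≤ max ((volume (Ω \ ball c₁ r₁)).toReal / (volume Ω).toReal)
        ((volume (ball c₂ r₂ \ Ω)).toReal / (volume (ball c₂ r₂)).toReal) :=
      le_max_of_le_left (by positivity)
    rcases Nat.eq_zero_or_pos N with hN | hN
    · -- degenerate case: the space is a single point
      subst hN
      have hball : ball c₁ r₁ = Set.univ := by
        ext x
        simp only [mem_ball, Set.mem_univ, iff_true]
        have : x = c₁ := Subsingleton.elim x c₁
        simp [this, hr₁]
      have hΩu : Ω = Set.univ := Set.eq_univ_of_univ_subset (hball ▸ hB₁)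
      have h0 : fraenkelAsymmetry 0 Ω ≤ 0 := by
        apply csInf_le hbdd
        exact ⟨c₁, r₁, hr₁, by rw [hball, hΩu], by simp [hball, hΩu]⟩
      linarith
    · haveI : Nontrivial (EuclideanSpace ℝ (Fin N)) :=
        Module.nontrivial_of_finrank_pos (R := ℝ) (by rw [finrank_euclideanSpace_fin]; exact hN)
      set V := volume Ω with hV
      set C := volume (ball (0 : EuclideanSpace ℝ (Fin N)) 1) with hC
      have hC0 : 0 < C := measure_ball_pos _ _ one_pos
      have hCt : C ≠ ⊤ := measure_ball_lt_top.ne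
      have hCr : (0:ℝ) < C.toReal := ENNReal.toReal_pos hC0.ne' hCt
      set r : ℝ := (V.toReal / C.toReal) ^ ((N:ℝ)⁻¹) with hrdef
      have hrpos : 0 < r := Real.rpow_pos_of_pos (div_pos hVt hCr) _
      have hrN : r ^ N = V.toReal / C.toReal :=
        Real.rpow_inv_natCast_pow (le_of_lt (div_pos hVt hCr)) hN.ne'
      have hballr : ∀ (c : EuclideanSpace ℝ (Fin N)) (ρ : ℝ), 0 ≤ ρ →
          volume (ball c ρ) = ENNReal.ofReal (ρ ^ N) * C := by
        intro c ρ hρ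
        rw [Measure.addHaar_ball volume c hρ, finrank_euclideanSpace_fin]
      have hvol : volume (ball c₁ r) = V := by
        rw [hballr c₁ r hrpos.le, hrN, ENNReal.ofReal_div_of_pos hCr,
          ENNReal.ofReal_toReal hVlt.ne, ENNReal.ofReal_toReal hCt,
          ENNReal.div_mul_cancel hC0.ne' hCt]
      have hr₁r : r₁ ≤ r := by
        have hle : volume (ball c₁ r₁) ≤ volume (ball c₁ r) := by
          rw [hvol]; exact measure_mono hB₁
        rw [hballr c₁ r₁ hr₁.le, hballr c₁ r hrpos.le,
          ENNReal.mul_le_mul_iff_left hC0.ne' hCt,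
          ENNReal.ofReal_le_ofReal_iff (by positivity)] at hle
        exact (pow_le_pow_iff_left₀ hr₁.le hrpos.le hN.ne').mp hle
      have hsub : ball c₁ r₁ ⊆ ball c₁ r := ball_subset_ball hr₁r
      have hmB : MeasurableSet (ball c₁ r) := measurableSet_ball
      have hmΩ : MeasurableSet Ω := hΩ.measurableSet
      -- |B \ Ω| = |Ω \ B|
      have h2 : volume (ball c₁ r \ Ω) = volume (Ω \ ball c₁ r) := by
        have e1 : volume (Ω \ ball c₁ r) + volume (Ω ∩ ball c₁ r) = V :=
          measure_diff_add_inter Ω hmB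
        have e2 : volume (ball c₁ r \ Ω) + volume (ball c₁ r ∩ Ω) = V := by
          rw [measure_diff_add_inter (ball c₁ r) hmΩ, hvol]
        rw [Set.inter_comm] at e2
        have hfin : volume (Ω ∩ ball c₁ r) ≠ ⊤ :=
          ((measure_mono Set.inter_subset_left).trans_lt hVlt).ne
        have := e2.trans e1.symm
        exact WithTop.add_right_cancel hfin this
      have h1 : volume (Ω \ ball c₁ r) ≤ volume (Ω \ ball c₁ r₁) :=
        measure_mono (Set.diff_subset_diff_right hsub)
      have hsymm : volume (symmDiff Ω (ball c₁ r)) ≤ 2 * volume (Ω \ ball c₁ r₁) := by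
        rw [Set.symmDiff_def]
        calc volume (Ω \ ball c₁ r ∪ ball c₁ r \ Ω)
            ≤ volume (Ω \ ball c₁ r) + volume (ball c₁ r \ Ω) := measure_union_le _ _
          _ = volume (Ω \ ball c₁ r) + volume (Ω \ ball c₁ r) := by rw [h2]
          _ ≤ volume (Ω \ ball c₁ r₁) + volume (Ω \ ball c₁ r₁) := add_le_add h1 h1
          _ = 2 * volume (Ω \ ball c₁ r₁) := (two_mul _).symm
      have hDfin : volume (Ω \ ball c₁ r₁) ≠ ⊤ :=
        ((measure_mono Set.diff_subset).trans_lt hVlt).ne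
      have hstep : fraenkelAsymmetry N Ω ≤
          (volume (symmDiff Ω (ball c₁ r))).toReal / V.toReal :=
        csInf_le hbdd ⟨c₁, r, hrpos, hvol, rfl⟩
      have htr : (volume (symmDiff Ω (ball c₁ r))).toReal ≤
          2 * (volume (Ω \ ball c₁ r₁)).toReal := by
        have := ENNReal.toReal_mono (by
          refine ENNReal.mul_ne_top (by simp) hDfin) hsymm
        rwa [ENNReal.toReal_mul, ENNReal.toReal_ofNat] at this
      refine hstep.trans ?_
      refine le_trans ?_ (mul_le_mul_of_nonneg_left (le_max_left _ _) (by norm_num))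
      rw [div_le_iff₀ hVt]
      calc (volume (symmDiff Ω (ball c₁ r))).toReal
          ≤ 2 * (volume (Ω \ ball c₁ r₁)).toReal := htr
        _ = 2 * ((volume (Ω \ ball c₁ r₁)).toReal / V.toReal) * V.toReal := by
            field_simp
  refine ⟨key, ?_⟩
  -- the melas set is nonempty
  have hTne : { a : ℝ | ∃ (c₁ c₂ : EuclideanSpace ℝ (Fin N)) (r₁ r₂ : ℝ), 0 < r₁ ∧ 0 < r₂ ∧
      ball c₁ r₁ ⊆ Ω ∧ Ω ⊆ ball c₂ r₂ ∧
      a = max ((volume (Ω \ ball c₁ r₁)).toReal / (volume Ω).toReal)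
              ((volume (ball c₂ r₂ \ Ω)).toReal / (volume (ball c₂ r₂)).toReal) }.Nonempty := by
    obtain ⟨x, hx⟩ := nonempty_of_measure_ne_zero hpos.ne'
    obtain ⟨ε, hε, hεsub⟩ := Metric.isOpen_iff.mp hΩ x hx
    obtain ⟨R, hR⟩ := hb.subset_closedBall (0 : EuclideanSpace ℝ (Fin N))
    refine ⟨_, x, 0, ε, |R| + 1, hε, by positivity, hεsub,
      hR.trans (closedBall_subset_ball (by
        have := le_abs_self R; linarith)), rfl⟩
  have hlow : fraenkelAsymmetry N Ω / 2 ≤ melasAsymmetry N Ω := by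
    apply le_csInf hTne
    rintro t ⟨c₁, c₂, r₁, r₂, h1, h2, h3, h4, rfl⟩
    linarith [key c₁ c₂ r₁ r₂ h1 h2 h3 h4]
  linarith
end

section
/- Quantitative Hardy-Littlewood: Let f : [0,∞) → [0,∞) be non-increasing, Ω ⊂ ℝ^N measurable with finite measure, Ω* the ball centered at 0 with |Ω*| = |Ω| and radius R_Ω = (|Ω|/ω_N)^(1/N). Set R₁ = (|Ω ∩ Ω*|/ω_N)^(1/N) and R₂ = ((|Ω \ Ω*| + |Ω|)/ω_N)^(1/N). Then ∫_{Ω*} f(|x|) dx − ∫_Ω f(|x|) dx ≥ N ω_N ∫_{R₁}^{R₂} |f(ρ) − f(R_Ω)| ρ^{N−1} dρ. -/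
/-!
Write `g(x) = f(|x|)` and `c = f(R_Ω)`. Since `|Ω*| = |Ω|`, the sets `Ω* \ Ω` and `Ω \ Ω*` have
the same measure, so
`∫_{Ω*} g - ∫_Ω g = ∫_{Ω* \ Ω} (g - c) + ∫_{Ω \ Ω*} (c - g)`, with both integrands nonnegative.
By the bathtub principle, among subsets of `Ω*` of measure `|Ω* \ Ω|` the radially decreasing
function `g - c` has least integral on the outer annulus `Ω* \ B_{R₁}`, and among subsets of the
complement of `Ω*` of measure `|Ω \ Ω*|` the radially increasing function `c - g` has least
integral on the inner annulus `B_{R₂} \ Ω*`. These two annuli make up `B_{R₂} \ B_{R₁}`, on which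
`|g - c|` is integrated in polar coordinates.
-/

open MeasureTheory Metric intervalIntegral Set
open scoped ENNReal

section Bathtub

variable {α : Type*} [MeasurableSpace α] {μ : Measure α} {g : α → ℝ≥0∞} {S T : Set α}
  {c : ℝ≥0∞}

theorem setLIntegral_add_tsub_add_tsub_eq (hg : Measurable g) (hS : MeasurableSet S)
    (hT : MeasurableSet T) (hμ : μ S = μ T) (hS_fin : μ S ≠ ∞)
    (hST : ∀ x ∈ S \ T, c ≤ g x) (hTS : ∀ x ∈ T \ S, g x ≤ c) :
    ∫⁻ x in T, g x ∂μ + ∫⁻ x in S \ T, (g x - c) ∂μ + ∫⁻ x in T \ S, (c - g x) ∂μ =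
      ∫⁻ x in S, g x ∂μ := by
  have hμ_sdiff : μ (S \ T) = μ (T \ S) :=
    measure_sdiff_symm hS.nullMeasurableSet hT.nullMeasurableSet hμ
      (measure_ne_top_of_subset inter_subset_left hS_fin)
  have hS_sdiff : ∫⁻ x in S \ T, g x ∂μ = ∫⁻ x in S \ T, (g x - c) ∂μ + c * μ (S \ T) := by
    rw [← setLIntegral_const, ← lintegral_add_right _ measurable_const]
    exact setLIntegral_congr_fun (hS.diff hT) fun x hx ↦ (tsub_add_cancel_of_le (hST x hx)).symm
  have hT_sdiff : ∫⁻ x in T \ S, g x ∂μ + ∫⁻ x in T \ S, (c - g x) ∂μ = c * μ (T \ S) := by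
    rw [← setLIntegral_const, ← lintegral_add_left hg]
    exact setLIntegral_congr_fun (hT.diff hS) fun x hx ↦ add_tsub_cancel_of_le (hTS x hx)
  rw [← lintegral_inter_add_sdiff _ T hS, ← lintegral_inter_add_sdiff _ S hT, inter_comm,
    hS_sdiff, hμ_sdiff, ← hT_sdiff]
  ring

theorem setLIntegral_le_setLIntegral_of_measure_eq (hg : Measurable g) (hS : MeasurableSet S)
    (hT : MeasurableSet T) (hμ : μ S = μ T) (hS_fin : μ S ≠ ∞)
    (hST : ∀ x ∈ S \ T, c ≤ g x) (hTS : ∀ x ∈ T \ S, g x ≤ c) :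
    ∫⁻ x in T, g x ∂μ ≤ ∫⁻ x in S, g x ∂μ :=
  (le_self_add.trans le_self_add).trans_eq
    (setLIntegral_add_tsub_add_tsub_eq hg hS hT hμ hS_fin hST hTS)

end Bathtub

section Annuli

variable {E : Type*} [NormedAddCommGroup E]

theorem ball_zero_sdiff_ball_zero (r₁ r₂ : ℝ) :
    ball (0 : E) r₂ \ ball 0 r₁ = norm ⁻¹' Ico r₁ r₂ := by
  ext x
  simp [and_comm]

theorem ball_zero_sdiff_ball_zero_union {r₁ r r₂ : ℝ} (h₁ : r₁ ≤ r) (h₂ : r ≤ r₂) :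
    (ball (0 : E) r \ ball 0 r₁) ∪ (ball 0 r₂ \ ball 0 r) = ball 0 r₂ \ ball 0 r₁ := by
  simp only [ball_zero_sdiff_ball_zero, ← preimage_union, Ico_union_Ico_eq_Ico h₁ h₂]

variable [MeasurableSpace E] [OpensMeasurableSpace E] (μ : Measure E)

theorem lintegral_ball_sdiff_ball_le_of_subset_ball {h : ℝ → ℝ≥0∞} (hh : AntitoneOn h (Ici 0))
    (hhm : Measurable h) {A : Set E} (hA : MeasurableSet A) {r₁ r₂ : ℝ} (hr₁ : 0 ≤ r₁)
    (hA_sub : A ⊆ ball 0 r₂) (hμA : μ A = μ (ball 0 r₂ \ ball 0 r₁)) (hA_fin : μ A ≠ ∞) :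
    ∫⁻ x in ball 0 r₂ \ ball 0 r₁, h ‖x‖ ∂μ ≤ ∫⁻ x in A, h ‖x‖ ∂μ := by
  refine setLIntegral_le_setLIntegral_of_measure_eq (c := h r₁) (hhm.comp measurable_norm) hA
    (measurableSet_ball.diff measurableSet_ball) hμA hA_fin (fun x hx ↦ ?_) (fun x hx ↦ ?_)
  · have : ‖x‖ < r₁ := by_contra fun h' ↦ hx.2 ⟨hA_sub hx.1, mt mem_ball_zero_iff.1 h'⟩
    exact hh (norm_nonneg x) hr₁ this.le
  · exact hh hr₁ (norm_nonneg x) (not_lt.1 (mt mem_ball_zero_iff.2 hx.1.2))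

theorem lintegral_ball_sdiff_ball_le_of_subset_compl_ball {h : ℝ → ℝ≥0∞}
    (hh : MonotoneOn h (Ici 0)) (hhm : Measurable h) {A : Set E} (hA : MeasurableSet A)
    {r₁ r₂ : ℝ} (hr₂ : 0 ≤ r₂) (hA_sub : A ⊆ (ball 0 r₁)ᶜ)
    (hμA : μ A = μ (ball 0 r₂ \ ball 0 r₁)) (hA_fin : μ A ≠ ∞) :
    ∫⁻ x in ball 0 r₂ \ ball 0 r₁, h ‖x‖ ∂μ ≤ ∫⁻ x in A, h ‖x‖ ∂μ := by
  refine setLIntegral_le_setLIntegral_of_measure_eq (c := h r₂) (hhm.comp measurable_norm) hA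
    (measurableSet_ball.diff measurableSet_ball) hμA hA_fin (fun x hx ↦ ?_) (fun x hx ↦ ?_)
  · have : r₂ ≤ ‖x‖ := not_lt.1 fun h' ↦ hx.2 ⟨mem_ball_zero_iff.2 h', hA_sub hx.1⟩
    exact hh hr₂ (norm_nonneg x) this
  · exact hh (norm_nonneg x) hr₂ (mem_ball_zero_iff.1 hx.1.1).le

theorem lintegral_add_annuli_le_lintegral_ball {g : ℝ → ℝ≥0∞} (hg : AntitoneOn g (Ici 0))
    (hgm : Measurable g) {Ω : Set E} (hΩ : MeasurableSet Ω) (hΩ_fin : μ Ω ≠ ∞)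
    {r₁ r r₂ : ℝ} (hr₁ : 0 ≤ r₁) (h₁ : r₁ ≤ r) (h₂ : r ≤ r₂)
    (hμr : μ (ball 0 r) = μ Ω) (hμr₁ : μ (ball 0 r₁) = μ (Ω ∩ ball 0 r))
    (hμr₂ : μ (ball 0 r₂) = μ (Ω \ ball 0 r) + μ Ω) :
    ∫⁻ x in Ω, g ‖x‖ ∂μ + ∫⁻ x in ball 0 r \ ball 0 r₁, (g ‖x‖ - g r) ∂μ +
        ∫⁻ x in ball 0 r₂ \ ball 0 r, (g r - g ‖x‖) ∂μ ≤ ∫⁻ x in ball 0 r, g ‖x‖ ∂μ := by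
  have hr : 0 ≤ r := hr₁.trans h₁
  have hB_fin : μ (ball 0 r) ≠ ∞ := hμr ▸ hΩ_fin
  have hΩ_sdiff_fin : μ (Ω \ ball 0 r) ≠ ∞ := measure_ne_top_of_subset sdiff_subset hΩ_fin
  have hB_sdiff : μ (ball 0 r \ Ω) = μ (Ω \ ball 0 r) :=
    measure_sdiff_symm measurableSet_ball.nullMeasurableSet hΩ.nullMeasurableSet hμr
      (measure_ne_top_of_subset inter_subset_left hB_fin)
  have hinner : μ (ball 0 r \ ball 0 r₁) = μ (Ω \ ball 0 r) := by
    rw [measure_sdiff (ball_subset_ball h₁) measurableSet_ball.nullMeasurableSet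
      (measure_ne_top_of_subset (ball_subset_ball h₁) hB_fin), hμr, hμr₁,
      ← measure_sdiff inter_subset_left (hΩ.inter measurableSet_ball).nullMeasurableSet
      (measure_ne_top_of_subset inter_subset_left hΩ_fin), sdiff_self_inter]
  have houter : μ (ball 0 r₂ \ ball 0 r) = μ (Ω \ ball 0 r) := by
    rw [measure_sdiff (ball_subset_ball h₂) measurableSet_ball.nullMeasurableSet hB_fin, hμr₂,
      hμr, ENNReal.add_sub_cancel_right hΩ_fin]
  rw [← setLIntegral_add_tsub_add_tsub_eq (g := fun x : E ↦ g ‖x‖) (hgm.comp measurable_norm) measurableSet_ball hΩ hμr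
    hB_fin (fun x hx ↦ hg (norm_nonneg x) hr (mem_ball_zero_iff.1 hx.1).le)
    (fun x hx ↦ hg hr (norm_nonneg x) (not_lt.1 (mt mem_ball_zero_iff.2 hx.2)))]
  gcongr ∫⁻ x in Ω, g ‖x‖ ∂μ + ?_ + ?_
  · exact lintegral_ball_sdiff_ball_le_of_subset_ball μ (h := fun s ↦ g s - g r)
      (fun s hs t ht hst ↦ tsub_le_tsub_right (hg hs ht hst) _) (hgm.sub measurable_const)
      (measurableSet_ball.diff hΩ) hr₁ sdiff_subset (hB_sdiff.trans hinner.symm)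
      (hB_sdiff ▸ hΩ_sdiff_fin)
  · exact lintegral_ball_sdiff_ball_le_of_subset_compl_ball μ (h := fun s ↦ g r - g s)
      (fun s hs t ht hst ↦ tsub_le_tsub_left (hg hs ht hst) _) (measurable_const.sub hgm)
      (hΩ.diff measurableSet_ball) (hr.trans h₂) (fun x hx ↦ hx.2) houter.symm hΩ_sdiff_fin

theorem lintegral_ball_sdiff_ball_ofReal_abs_sub {f : ℝ → ℝ}
    (hf0 : ∀ s ∈ Ici (0 : ℝ), 0 ≤ f s) (hf : AntitoneOn f (Ici 0)) {r₁ r r₂ : ℝ}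
    (hr₁ : 0 ≤ r₁) (h₁ : r₁ ≤ r) (h₂ : r ≤ r₂) :
    ∫⁻ x in ball (0 : E) r₂ \ ball 0 r₁, ENNReal.ofReal |f ‖x‖ - f r| ∂μ =
      ∫⁻ x in ball 0 r \ ball 0 r₁, (ENNReal.ofReal (f ‖x‖) - ENNReal.ofReal (f r)) ∂μ +
        ∫⁻ x in ball 0 r₂ \ ball 0 r, (ENNReal.ofReal (f r) - ENNReal.ofReal (f ‖x‖)) ∂μ := by
  have hr : 0 ≤ r := hr₁.trans h₁
  rw [← ball_zero_sdiff_ball_zero_union h₁ h₂, lintegral_union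
    (measurableSet_ball.diff measurableSet_ball) (disjoint_left.2 fun x hx hx' ↦ hx'.2 hx.1)]
  congr 1
  · refine setLIntegral_congr_fun (measurableSet_ball.diff measurableSet_ball) fun x hx ↦ ?_
    have : f r ≤ f ‖x‖ := hf (norm_nonneg x) hr (mem_ball_zero_iff.1 hx.1).le
    rw [abs_of_nonneg (sub_nonneg.2 this), ENNReal.ofReal_sub _ (hf0 r hr)]
  · refine setLIntegral_congr_fun (measurableSet_ball.diff measurableSet_ball) fun x hx ↦ ?_
    have : f ‖x‖ ≤ f r := hf hr (norm_nonneg x) (not_lt.1 (mt mem_ball_zero_iff.2 hx.2))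
    rw [abs_of_nonpos (sub_nonpos.2 this), neg_sub, ENNReal.ofReal_sub _ (hf0 _ (norm_nonneg x))]

theorem AntitoneOn.integrableOn_ball_fun_norm {f : ℝ → ℝ} (hf : AntitoneOn f (Ici 0))
    (hfm : Measurable f) {r : ℝ} (hr : μ (ball (0 : E) r) ≠ ∞) :
    IntegrableOn (fun x ↦ f ‖x‖) (ball (0 : E) r) μ := by
  refine Measure.integrableOn_of_bounded (M := max |f r| |f 0|) hr
    (hfm.comp measurable_norm).aestronglyMeasurable ?_
  filter_upwards [ae_restrict_mem measurableSet_ball] with x hx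
  have hx : ‖x‖ < r := mem_ball_zero_iff.1 hx
  exact abs_le_max_abs_abs (hf (norm_nonneg x) ((norm_nonneg x).trans hx.le) hx.le)
    (hf self_mem_Ici (norm_nonneg x) (norm_nonneg x))

end Annuli

section AddHaar

open Module

variable {E F : Type*} [NormedAddCommGroup E] [NormedSpace ℝ E] [Nontrivial E]
  [FiniteDimensional ℝ E] [MeasurableSpace E] [BorelSpace E] (μ : Measure E)
  [μ.IsAddHaarMeasure] [NormedAddCommGroup F] [NormedSpace ℝ F]

theorem addHaar_ball_zero_rpow_inv_finrank {a : ℝ} (ha : 0 ≤ a) :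
    μ (ball (0 : E) ((a / μ.real (ball 0 1)) ^ ((1 : ℝ) / finrank ℝ E))) = ENNReal.ofReal a := by
  have hpos : 0 < μ.real (ball (0 : E) 1) :=
    ENNReal.toReal_pos (measure_ball_pos μ 0 one_pos).ne' measure_ball_lt_top.ne
  rw [Measure.addHaar_ball μ 0 (by positivity), one_div,
    Real.rpow_inv_natCast_pow (by positivity) finrank_pos.ne', ← ofReal_measureReal,
    ← ENNReal.ofReal_mul (by positivity), div_mul_cancel₀ a hpos.ne']

theorem integral_ball_sdiff_ball_fun_norm (φ : ℝ → F) {r₁ r₂ : ℝ} (hr₁ : 0 ≤ r₁)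
    (h : r₁ ≤ r₂) :
    ∫ x in ball (0 : E) r₂ \ ball 0 r₁, φ ‖x‖ ∂μ =
      (finrank ℝ E * μ.real (ball 0 1)) • ∫ ρ in r₁..r₂, ρ ^ (finrank ℝ E - 1) • φ ρ := by
  have hIco : (Ioi 0 ∩ Ico r₁ r₂ : Set ℝ) =ᵐ[volume] Ioc r₁ r₂ := by
    refine (ae_eq_set.2 ⟨?_, ?_⟩).trans Ico_ae_eq_Ioc
    · rw [sdiff_eq_empty.2 inter_subset_right, measure_empty]
    · refine measure_mono_null (fun x hx ↦ ?_) (Real.volume_singleton (a := 0))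
      exact le_antisymm (not_lt.1 fun h ↦ hx.2 ⟨h, hx.1⟩) (hr₁.trans hx.1.1)
  calc ∫ x in ball (0 : E) r₂ \ ball 0 r₁, φ ‖x‖ ∂μ = ∫ x, (Ico r₁ r₂).indicator φ ‖x‖ ∂μ := by
        rw [ball_zero_sdiff_ball_zero,
          ← MeasureTheory.integral_indicator (measurableSet_Ico.preimage measurable_norm)]
        rfl
    _ = _ := integral_fun_norm_addHaar μ _
    _ = _ := by
      simp_rw [← indicator_smul_apply (Ico r₁ r₂) (fun y : ℝ ↦ y ^ (finrank ℝ E - 1)) φ]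
      rw [setIntegral_indicator measurableSet_Ico, setIntegral_congr_set hIco,
        ← integral_of_le h, ← Nat.cast_smul_eq_nsmul ℝ, smul_smul]

theorem lintegral_add_ofReal_integral_le_lintegral_ball {f : ℝ → ℝ}
    (hf0 : ∀ s ∈ Ici (0 : ℝ), 0 ≤ f s) (hf : AntitoneOn f (Ici 0)) (hfm : Measurable f)
    {Ω : Set E} (hΩ : MeasurableSet Ω) (hΩ_fin : μ Ω ≠ ∞) {r₁ r r₂ : ℝ} (hr₁ : 0 ≤ r₁)
    (h₁ : r₁ ≤ r) (h₂ : r ≤ r₂) (hμr : μ (ball 0 r) = μ Ω)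
    (hμr₁ : μ (ball 0 r₁) = μ (Ω ∩ ball 0 r)) (hμr₂ : μ (ball 0 r₂) = μ (Ω \ ball 0 r) + μ Ω) :
    ∫⁻ x in Ω, ENNReal.ofReal (f ‖x‖) ∂μ + ENNReal.ofReal (finrank ℝ E * μ.real (ball 0 1) *
        ∫ ρ in r₁..r₂, |f ρ - f r| * ρ ^ (finrank ℝ E - 1)) ≤
      ∫⁻ x in ball 0 r, ENNReal.ofReal (f ‖x‖) ∂μ := by
  have hHL := lintegral_add_annuli_le_lintegral_ball μ (g := fun s ↦ ENNReal.ofReal (f s))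
    (fun s hs t ht hst ↦ ENNReal.ofReal_le_ofReal (hf hs ht hst)) hfm.ennreal_ofReal hΩ hΩ_fin
    hr₁ h₁ h₂ hμr hμr₁ hμr₂
  rw [add_assoc, ← lintegral_ball_sdiff_ball_ofReal_abs_sub μ hf0 hf hr₁ h₁ h₂] at hHL
  have hint : IntegrableOn (fun x ↦ |f ‖x‖ - f r|) (ball (0 : E) r₂ \ ball 0 r₁) μ :=
    IntegrableOn.mono_set ((hf.integrableOn_ball_fun_norm μ hfm measure_ball_lt_top.ne).sub
      (integrableOn_const measure_ball_lt_top.ne)).abs sdiff_subset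
  convert hHL using 3
  rw [← ofReal_integral_eq_lintegral_ofReal hint (ae_of_all _ fun _ ↦ abs_nonneg _),
    integral_ball_sdiff_ball_fun_norm μ (fun ρ ↦ |f ρ - f r|) hr₁ (h₁.trans h₂), smul_eq_mul]
  simp_rw [smul_eq_mul, mul_comm (_ ^ _)]

end AddHaar

/-- Quantitative Hardy–Littlewood inequality: for a non-increasing `f : [0,∞) → [0,∞)`
and a measurable `Ω ⊆ ℝ^N` of finite measure, with `Ω*` the ball of radius
`R_Ω = (|Ω|/ω_N)^{1/N}` centered at the origin, and `R₁ = (|Ω ∩ Ω*|/ω_N)^{1/N}`,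
`R₂ = ((|Ω \ Ω*| + |Ω|)/ω_N)^{1/N}`, one has
`∫_{Ω*} f(|x|) dx − ∫_Ω f(|x|) dx ≥ N ω_N ∫_{R₁}^{R₂} |f(ρ) − f(R_Ω)| ρ^{N-1} dρ`. -/
theorem quantitative_hardy_littlewood (N : ℕ) (hN : 1 ≤ N) (f : ℝ → ℝ)
    (hf0 : ∀ s ∈ Set.Ici (0:ℝ), 0 ≤ f s) (hf : AntitoneOn f (Set.Ici (0:ℝ)))
    (hfm : Measurable f)
    (Ω : Set (EuclideanSpace ℝ (Fin N))) (hΩ : MeasurableSet Ω) (hfin : volume Ω < ⊤) :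
    letI ωN : ℝ := (volume (ball (0 : EuclideanSpace ℝ (Fin N)) 1)).toReal
    letI RΩ : ℝ := ((volume Ω).toReal / ωN) ^ ((1 : ℝ) / N)
    letI R₁ : ℝ :=
      ((volume (Ω ∩ ball (0 : EuclideanSpace ℝ (Fin N)) RΩ)).toReal / ωN) ^ ((1 : ℝ) / N)
    letI R₂ : ℝ :=
      (((volume (Ω \ ball (0 : EuclideanSpace ℝ (Fin N)) RΩ)).toReal + (volume Ω).toReal)
        / ωN) ^ ((1 : ℝ) / N)
    ∫⁻ x in ball (0 : EuclideanSpace ℝ (Fin N)) RΩ, ENNReal.ofReal (f ‖x‖) ≥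
      (∫⁻ x in Ω, ENNReal.ofReal (f ‖x‖)) +
        ENNReal.ofReal (N * ωN * ∫ ρ in R₁..R₂, |f ρ - f RΩ| * ρ ^ (N - 1)) := by
  set ωN : ℝ := (volume (ball (0 : EuclideanSpace ℝ (Fin N)) 1)).toReal
  set RΩ : ℝ := ((volume Ω).toReal / ωN) ^ ((1 : ℝ) / N)
  set R₁ : ℝ := ((volume (Ω ∩ ball 0 RΩ)).toReal / ωN) ^ ((1 : ℝ) / N)
  set R₂ : ℝ := (((volume (Ω \ ball 0 RΩ)).toReal + (volume Ω).toReal) / ωN) ^ ((1 : ℝ) / N)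
  have : NeZero N := ⟨by omega⟩
  have hrad (a : ℝ) (ha : 0 ≤ a) :
      volume (ball (0 : EuclideanSpace ℝ (Fin N)) ((a / ωN) ^ ((1 : ℝ) / N))) = .ofReal a := by
    have h := addHaar_ball_zero_rpow_inv_finrank (E := EuclideanSpace ℝ (Fin N)) volume ha
    rwa [finrank_euclideanSpace_fin, measureReal_def] at h
  have hΩ_fin : volume Ω ≠ ∞ := hfin.ne
  have hR₁ : R₁ ≤ RΩ := Real.rpow_le_rpow (by positivity) (div_le_div_of_nonneg_right
    (ENNReal.toReal_mono hΩ_fin (measure_mono inter_subset_left)) ENNReal.toReal_nonneg)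
    (by positivity)
  have hR₂ : RΩ ≤ R₂ := Real.rpow_le_rpow (by positivity) (div_le_div_of_nonneg_right
    (le_add_of_nonneg_left ENNReal.toReal_nonneg) ENNReal.toReal_nonneg) (by positivity)
  have h := lintegral_add_ofReal_integral_le_lintegral_ball volume hf0 hf hfm hΩ hΩ_fin
    (by positivity) hR₁ hR₂
    (by rw [hrad _ ENNReal.toReal_nonneg, ENNReal.ofReal_toReal hΩ_fin])
    (by rw [hrad _ ENNReal.toReal_nonneg,
      ENNReal.ofReal_toReal (measure_ne_top_of_subset inter_subset_left hΩ_fin)])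
    (by rw [hrad _ (by positivity), ENNReal.ofReal_add ENNReal.toReal_nonneg
      ENNReal.toReal_nonneg, ENNReal.ofReal_toReal (measure_ne_top_of_subset sdiff_subset hΩ_fin),
      ENNReal.ofReal_toReal hΩ_fin])
  rwa [finrank_euclideanSpace_fin, measureReal_def] at h
end

section
/- Faber-Krahn hierarchy via Kohler-Jobin: Assume the Kohler-Jobin inequality T(Ω)^θ λ(Ω) ≥ T(B)^θ λ(B) holds with exponent 0 < θ ≤ 1, and suppose the quantitative Saint-Venant inequality |B|^{-(N+2)/N} T(B) − |Ω|^{-(N+2)/N} T(Ω) ≥ (1/C) G(d(Ω)) holds, where G is increasing with G(0)=0 and d is a scaling-invariant asymmetry bounded by M. Then for every Ω with |Ω| = |B| = 1 and T(B) ≤ 2T(Ω), one has λ(Ω)/λ(B) − 1 ≥ (2^θ − 1)/(C·T(B)) · G(d(Ω)). -/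
/-- Key concavity step: for `t ∈ [1,2]` and `θ ∈ [0,1]`, `t^θ ≥ 1 + (2^θ − 1)(t − 1)`. -/
lemma rpow_ge_linear {θ t : ℝ} (hθ0 : 0 ≤ θ) (hθ1 : θ ≤ 1) (ht1 : 1 ≤ t) (ht2 : t ≤ 2) :
    t ^ θ ≥ 1 + ((2 : ℝ) ^ θ - 1) * (t - 1) := by
  have hcc := Real.concaveOn_rpow hθ0 hθ1
  have h := hcc.2 (Set.mem_Ici.2 (by norm_num : (0:ℝ) ≤ 1))
    (Set.mem_Ici.2 (by norm_num : (0:ℝ) ≤ 2))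
    (by linarith : (0:ℝ) ≤ 2 - t) (by linarith : (0:ℝ) ≤ t - 1) (by ring)
  have hxy : (2 - t) • (1:ℝ) + (t - 1) • (2:ℝ) = t := by simp [smul_eq_mul]; ring
  rw [hxy] at h
  have h1 : (1:ℝ) ^ θ = 1 := Real.one_rpow θ
  simp only [smul_eq_mul, h1] at h
  nlinarith

/-- Faber–Krahn hierarchy via Kohler–Jobin: assuming the Kohler–Jobin inequality
`T(Ω)^θ λ(Ω) ≥ T(B)^θ λ(B)` with `θ ∈ (0,1]`, and the quantitative Saint-Venant
inequality `T(B) − T(Ω) ≥ (1/C) G(d(Ω))` (both sets of unit measure, so the measure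
factors disappear), if moreover `T(B) ≤ 2 T(Ω)` then
`λ(Ω)/λ(B) − 1 ≥ (2^θ − 1)/(C T(B)) · G(d(Ω))`. -/
theorem faber_krahn_hierarchy (θ C TΩ TB lamΩ lamB dΩ M : ℝ) (G : ℝ → ℝ)
    (hθ0 : 0 < θ) (hθ1 : θ ≤ 1) (hC : 0 < C)
    (hTΩ : 0 < TΩ) (hTle : TΩ ≤ TB) (hlamB : 0 < lamB)
    (hGmono : MonotoneOn G (Set.Ici (0:ℝ))) (hG0 : G 0 = 0)
    (hd0 : 0 ≤ dΩ) (hdM : dΩ ≤ M)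
    (hKJ : TΩ ^ θ * lamΩ ≥ TB ^ θ * lamB)
    (hSV : TB - TΩ ≥ (1 / C) * G dΩ)
    (h2 : TB ≤ 2 * TΩ) :
    lamΩ / lamB - 1 ≥ ((2 : ℝ) ^ θ - 1) / (C * TB) * G dΩ := by
  have hTB : 0 < TB := lt_of_lt_of_le hTΩ hTle
  have hG : 0 ≤ G dΩ := by
    have := hGmono (Set.mem_Ici.2 le_rfl) (Set.mem_Ici.2 hd0) hd0
    rw [hG0] at this; exact this
  set t : ℝ := TB / TΩ with ht
  have ht1 : 1 ≤ t := (one_le_div hTΩ).2 hTle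
  have ht2 : t ≤ 2 := (div_le_iff₀ hTΩ).2 (by linarith)
  have hTΩθ : (0:ℝ) < TΩ ^ θ := Real.rpow_pos_of_pos hTΩ θ
  have hdiv : t ^ θ = TB ^ θ / TΩ ^ θ := Real.div_rpow hTB.le hTΩ.le θ
  have hlam : lamΩ / lamB ≥ t ^ θ := by
    rw [ge_iff_le, hdiv, div_le_div_iff₀ hTΩθ hlamB]
    calc TB ^ θ * lamB ≤ TΩ ^ θ * lamΩ := hKJ
      _ = lamΩ * TΩ ^ θ := mul_comm _ _
  have hkey := rpow_ge_linear hθ0.le hθ1 ht1 ht2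
  have h2θ : (1:ℝ) ≤ (2:ℝ) ^ θ := by
    have := Real.rpow_le_rpow (by norm_num : (0:ℝ) ≤ 1) (by norm_num : (1:ℝ) ≤ 2) hθ0.le
    simpa using this
  have hA : (0:ℝ) ≤ (2:ℝ) ^ θ - 1 := by linarith
  have hCu : G dΩ ≤ C * (TB - TΩ) := by
    have := mul_le_mul_of_nonneg_left hSV hC.le
    have hid : C * ((1 / C) * G dΩ) = G dΩ := by field_simp
    linarith [hid ▸ this]
  have hB : G dΩ / (C * TB) ≤ t - 1 := by
    have htm : t - 1 = (TB - TΩ) / TΩ := by rw [ht]; field_simp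
    rw [htm, div_le_div_iff₀ (by positivity) hTΩ]
    nlinarith [mul_le_mul_of_nonneg_right hCu hTB.le,
      mul_le_mul_of_nonneg_left hTle hG]
  have hmul := mul_le_mul_of_nonneg_left hB hA
  have heq : ((2:ℝ) ^ θ - 1) / (C * TB) * G dΩ
      = ((2:ℝ) ^ θ - 1) * (G dΩ / (C * TB)) := by ring
  linarith [hlam, hkey, hmul, heq ▸ le_refl (((2:ℝ) ^ θ - 1) / (C * TB) * G dΩ)]
end
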